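/- arXiv:1212.0816 — 4 statements merged into one kernel-verified Lean document; each statement's English description precedes it below -/
import Mathlib

section
/- (LaSalle's invariance principle.) Let Y be a Banach space, U ⊆ Y open, f : U → Y a continuous vector field, and let φ : [0,∞) × U → U be a continuous semiflow such that for every y ∈ U the curve t ↦ φ(t, y) is differentiable with derivative f(φ(t, y)) (i.e. φ solves ẏ = f(y)). Let H : U → ℝ be continuously Fréchet differentiable and suppose that the Lie derivative dH(y)[f(y)] ≤ 0 for all y ∈ U. Set N := {y ∈ U : dH(y)[f(y)] = 0} and let I be the largest invariant set contained in N (i.e. the union of all subsets S ⊆ N with φ(t, S) ⊆ S for all t ≥ 0). Then for every y₀ ∈ U whose forward orbit is precompact (closure compact and contained in U), the ω-limit set of y₀ is a nonempty subset of I. -/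
/-!
Along the orbit of `y₀` the Lyapunov function `H` is nonincreasing, so it has the same limit
along every sequence of times tending to infinity, i.e. `H` is constant on the ω-limit set `Ω`.
By continuity of the semiflow `Ω` is forward invariant, so `H` is constant along every orbit
starting in `Ω`; differentiating at time `0` shows that the Lie derivative vanishes on `Ω`.
Hence `Ω` is an invariant subset of `N` and lies in `I`. Compactness of the orbit closure gives
a convergent sequence `φ (n, y₀)`, so `Ω` is nonempty.
-/

open Filter Topology Set

theorem le_of_antitoneOn_of_tendsto_comp {g : ℝ → ℝ} (hg : AntitoneOn g (Ici 0))
    {ts ss : ℕ → ℝ} (hts0 : ∀ n, 0 ≤ ts n) (htsT : Tendsto ts atTop atTop) (hss0 : ∀ n, 0 ≤ ss n)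
    {a b : ℝ} (ha : Tendsto (g ∘ ts) atTop (𝓝 a)) (hb : Tendsto (g ∘ ss) atTop (𝓝 b)) :
    a ≤ b := by
  have hle : ∀ m, a ≤ g (ss m) := fun m =>
    le_of_tendsto ha <| (htsT.eventually_ge_atTop (ss m)).mono fun n hn =>
      hg (hss0 m) (hts0 n) hn
  exact ge_of_tendsto hb (Eventually.of_forall hle)

section OmegaLimit

variable {X : Type*}

def forwardOrbit (φ : ℝ × X → X) (y : X) : Set X := {x | ∃ t : ℝ, 0 ≤ t ∧ φ (t, y) = x}

theorem mem_forwardOrbit {φ : ℝ × X → X} {y : X} {t : ℝ} (ht : 0 ≤ t) :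
    φ (t, y) ∈ forwardOrbit φ y :=
  ⟨t, ht, rfl⟩

variable [TopologicalSpace X]

def seqOmegaLimit (φ : ℝ × X → X) (y : X) : Set X :=
  {η | ∃ ts : ℕ → ℝ, (∀ n, 0 ≤ ts n) ∧ Tendsto ts atTop atTop ∧
    Tendsto (fun n => φ (ts n, y)) atTop (𝓝 η)}

variable {φ : ℝ × X → X} {y : X}

theorem seqOmegaLimit_subset_closure_forwardOrbit :
    seqOmegaLimit φ y ⊆ closure (forwardOrbit φ y) := by
  rintro η ⟨ts, hts0, -, hlim⟩
  exact mem_closure_of_tendsto hlim (Eventually.of_forall fun n => mem_forwardOrbit (hts0 n))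

theorem seqOmegaLimit_nonempty [FirstCountableTopology X]
    (hcpt : IsCompact (closure (forwardOrbit φ y))) : (seqOmegaLimit φ y).Nonempty := by
  obtain ⟨η, -, ψ, hψ, hlim⟩ := hcpt.tendsto_subseq fun n : ℕ =>
    subset_closure (mem_forwardOrbit (φ := φ) (y := y) (Nat.cast_nonneg n))
  exact ⟨η, fun n => (ψ n : ℝ), fun n => Nat.cast_nonneg _,
    tendsto_natCast_atTop_atTop.comp hψ.tendsto_atTop, hlim⟩

theorem mapsTo_seqOmegaLimit {U : Set X} (hcont : ContinuousOn φ (Ici 0 ×ˢ U))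
    (hsemi : ∀ t s : ℝ, 0 ≤ t → 0 ≤ s → φ (t + s, y) = φ (t, φ (s, y)))
    (hU : closure (forwardOrbit φ y) ⊆ U) {t : ℝ} (ht : 0 ≤ t) :
    MapsTo (fun η => φ (t, η)) (seqOmegaLimit φ y) (seqOmegaLimit φ y) := by
  rintro η ⟨ts, hts0, htsT, hlim⟩
  have hηU : η ∈ U := hU (seqOmegaLimit_subset_closure_forwardOrbit ⟨ts, hts0, htsT, hlim⟩)
  have hpairs : Tendsto (fun n => (t, φ (ts n, y))) atTop (𝓝[Ici 0 ×ˢ U] (t, η)) :=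
    tendsto_nhdsWithin_iff.mpr ⟨tendsto_const_nhds.prodMk_nhds hlim,
      Eventually.of_forall fun n => ⟨ht, hU (subset_closure (mem_forwardOrbit (hts0 n)))⟩⟩
  refine ⟨fun n => t + ts n, fun n => add_nonneg ht (hts0 n),
    tendsto_atTop_add_const_left _ t htsT, ?_⟩
  exact ((hcont (t, η) ⟨ht, hηU⟩).tendsto.comp hpairs).congr fun n =>
    (hsemi t _ ht (hts0 n)).symm

theorem eq_of_mem_seqOmegaLimit {H : X → ℝ} (hanti : AntitoneOn (fun t => H (φ (t, y))) (Ici 0))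
    {η η' : X} (hη : η ∈ seqOmegaLimit φ y) (hη' : η' ∈ seqOmegaLimit φ y)
    (hHη : ContinuousAt H η) (hHη' : ContinuousAt H η') : H η = H η' := by
  obtain ⟨ts, hts0, htsT, hlim⟩ := hη
  obtain ⟨ss, hss0, hssT, hlim'⟩ := hη'
  exact le_antisymm
    (le_of_antitoneOn_of_tendsto_comp hanti hts0 htsT hss0 (hHη.tendsto.comp hlim)
      (hHη'.tendsto.comp hlim'))
    (le_of_antitoneOn_of_tendsto_comp hanti hss0 hssT hts0 (hHη'.tendsto.comp hlim')
      (hHη.tendsto.comp hlim))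

end OmegaLimit

section Lyapunov

variable {Y : Type*} [NormedAddCommGroup Y] [NormedSpace ℝ Y] {H : Y → ℝ} {γ : ℝ → Y}

theorem antitoneOn_comp_of_lie_nonpos {v : ℝ → Y} {H' : ℝ → Y →L[ℝ] ℝ}
    (hγ : ∀ t, 0 ≤ t → HasDerivWithinAt γ (v t) (Ici 0) t)
    (hH : ∀ t, 0 ≤ t → HasFDerivAt H (H' t) (γ t)) (hlie : ∀ t, 0 ≤ t → H' t (v t) ≤ 0) :
    AntitoneOn (fun t => H (γ t)) (Ici 0) := by
  have hderiv : ∀ t, 0 ≤ t → HasDerivWithinAt (fun t => H (γ t)) (H' t (v t)) (Ici 0) t :=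
    fun t ht => (hH t ht).comp_hasDerivWithinAt t (hγ t ht)
  refine antitoneOn_of_hasDerivWithinAt_nonpos (f' := fun t => H' t (v t)) (convex_Ici 0)
    (fun t ht => (hderiv t ht).continuousWithinAt) (fun t ht => ?_) (fun t ht => ?_)
  · rw [interior_Ici] at ht ⊢
    exact (hderiv t (le_of_lt ht)).mono Ioi_subset_Ici_self
  · rw [interior_Ici] at ht
    exact hlie t (le_of_lt ht)

theorem HasFDerivAt.apply_eq_zero_of_comp_const_on_Ici {x v : Y} {H'x : Y →L[ℝ] ℝ}
    (hH : HasFDerivAt H H'x x) (hγ0 : γ 0 = x) (hγ : HasDerivWithinAt γ v (Ici 0) 0)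
    (hconst : ∀ s, 0 ≤ s → H (γ s) = H x) : H'x v = 0 := by
  subst hγ0
  have hderiv := hH.comp_hasDerivWithinAt 0 hγ
  have hderiv_zero : HasDerivWithinAt (fun s => H (γ s)) 0 (Ici 0) 0 :=
    (hasDerivWithinAt_const 0 (Ici 0) (H (γ 0))).congr hconst (hconst 0 le_rfl)
  exact (uniqueDiffOn_Ici 0 0 self_mem_Ici).eq_deriv _ hderiv hderiv_zero

end Lyapunov

theorem lasalle_invariance_principle_general
    {Y : Type*} [NormedAddCommGroup Y] [NormedSpace ℝ Y]
    (U : Set Y)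
    (f : Y → Y)
    (φ : ℝ × Y → Y)
    (hφcont : ContinuousOn φ (Ici (0:ℝ) ×ˢ U))
    (hφ0 : ∀ y ∈ U, φ (0, y) = y)
    (hφsemi : ∀ t s : ℝ, 0 ≤ t → 0 ≤ s → ∀ y ∈ U, φ (t + s, y) = φ (t, φ (s, y)))
    (hφode : ∀ y ∈ U, ∀ t : ℝ, 0 ≤ t →
      HasDerivWithinAt (fun s => φ (s, y)) (f (φ (t, y))) (Ici (0:ℝ)) t)
    (H : Y → ℝ) (H' : Y → Y →L[ℝ] ℝ)
    (hH : ∀ y ∈ U, HasFDerivAt H (H' y) y)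
    (hLie : ∀ y ∈ U, H' y (f y) ≤ 0)
    (N : Set Y) (hN : N = {y | y ∈ U ∧ H' y (f y) = 0})
    (I : Set Y)
    (hI : I = ⋃₀ {S : Set Y | S ⊆ N ∧ ∀ t : ℝ, 0 ≤ t → ∀ z ∈ S, φ (t, z) ∈ S})
    (y₀ : Y) (hy₀ : y₀ ∈ U)
    (horb : IsCompact (closure {x : Y | ∃ t : ℝ, 0 ≤ t ∧ φ (t, y₀) = x}))
    (horbU : closure {x : Y | ∃ t : ℝ, 0 ≤ t ∧ φ (t, y₀) = x} ⊆ U) :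
    ({η : Y | ∃ ts : ℕ → ℝ, (∀ n, 0 ≤ ts n) ∧ Tendsto ts atTop atTop ∧
        Tendsto (fun n => φ (ts n, y₀)) atTop (𝓝 η)}).Nonempty ∧
    {η : Y | ∃ ts : ℕ → ℝ, (∀ n, 0 ≤ ts n) ∧ Tendsto ts atTop atTop ∧
        Tendsto (fun n => φ (ts n, y₀)) atTop (𝓝 η)} ⊆ I := by
  change (seqOmegaLimit φ y₀).Nonempty ∧ seqOmegaLimit φ y₀ ⊆ I
  have horbitU : ∀ t, 0 ≤ t → φ (t, y₀) ∈ U := fun t ht =>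
    horbU (subset_closure (mem_forwardOrbit ht))
  have hΩU : seqOmegaLimit φ y₀ ⊆ U := seqOmegaLimit_subset_closure_forwardOrbit.trans horbU
  have hinv : ∀ t, 0 ≤ t → MapsTo (fun η => φ (t, η)) (seqOmegaLimit φ y₀) (seqOmegaLimit φ y₀) :=
    fun t => mapsTo_seqOmegaLimit hφcont (fun t s ht hs => hφsemi t s ht hs y₀ hy₀) horbU
  have hanti : AntitoneOn (fun t => H (φ (t, y₀))) (Ici 0) :=
    antitoneOn_comp_of_lie_nonpos (hφode y₀ hy₀) (fun t ht => hH _ (horbitU t ht))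
      (fun t ht => hLie _ (horbitU t ht))
  have hΩN : seqOmegaLimit φ y₀ ⊆ N := by
    intro η hη
    have hηU := hΩU hη
    have hconst : ∀ s, 0 ≤ s → H (φ (s, η)) = H η := fun s hs =>
      eq_of_mem_seqOmegaLimit hanti (hinv s hs hη) hη (hH _ (hΩU (hinv s hs hη))).continuousAt
        (hH η hηU).continuousAt
    have hode := hφode η hηU 0 le_rfl
    rw [hφ0 η hηU] at hode
    exact hN ▸ ⟨hηU, (hH η hηU).apply_eq_zero_of_comp_const_on_Ici (hφ0 η hηU) hode hconst⟩
  exact ⟨seqOmegaLimit_nonempty horb, hI ▸ subset_sUnion_of_mem ⟨hΩN, hinv⟩⟩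

/-- **LaSalle's invariance principle.**  Let `Y` be a Banach space, `U ⊆ Y` open,
`f` a continuous vector field on `U`, and `φ` a continuous semiflow on `U` solving
`ẏ = f(y)`.  If `H` is `C¹` on `U` with Lie derivative `dH(y)[f(y)] ≤ 0` on `U`,
`N = {y ∈ U : dH(y)[f(y)] = 0}`, and `I` is the largest invariant subset of `N`,
then the ω-limit set of any point with precompact forward orbit is a nonempty
subset of `I`. -/
theorem lasalle_invariance_principle
    {Y : Type*} [NormedAddCommGroup Y] [NormedSpace ℝ Y] [CompleteSpace Y]
    (U : Set Y) (hU : IsOpen U)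
    (f : Y → Y) (hf : ContinuousOn f U)
    (φ : ℝ × Y → Y)
    (hφU : ∀ t : ℝ, 0 ≤ t → ∀ y ∈ U, φ (t, y) ∈ U)
    (hφcont : ContinuousOn φ (Ici (0:ℝ) ×ˢ U))
    (hφ0 : ∀ y ∈ U, φ (0, y) = y)
    (hφsemi : ∀ t s : ℝ, 0 ≤ t → 0 ≤ s → ∀ y ∈ U, φ (t + s, y) = φ (t, φ (s, y)))
    (hφode : ∀ y ∈ U, ∀ t : ℝ, 0 ≤ t →
      HasDerivWithinAt (fun s => φ (s, y)) (f (φ (t, y))) (Ici (0:ℝ)) t)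
    (H : Y → ℝ) (H' : Y → Y →L[ℝ] ℝ)
    (hH : ∀ y ∈ U, HasFDerivAt H (H' y) y)
    (hH' : ContinuousOn H' U)
    (hLie : ∀ y ∈ U, H' y (f y) ≤ 0)
    (N : Set Y) (hN : N = {y | y ∈ U ∧ H' y (f y) = 0})
    (I : Set Y)
    (hI : I = ⋃₀ {S : Set Y | S ⊆ N ∧ ∀ t : ℝ, 0 ≤ t → ∀ z ∈ S, φ (t, z) ∈ S})
    (y₀ : Y) (hy₀ : y₀ ∈ U)
    (horb : IsCompact (closure {x : Y | ∃ t : ℝ, 0 ≤ t ∧ φ (t, y₀) = x}))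
    (horbU : closure {x : Y | ∃ t : ℝ, 0 ≤ t ∧ φ (t, y₀) = x} ⊆ U) :
    ({η : Y | ∃ ts : ℕ → ℝ, (∀ n, 0 ≤ ts n) ∧ Tendsto ts atTop atTop ∧
        Tendsto (fun n => φ (ts n, y₀)) atTop (𝓝 η)}).Nonempty ∧
    {η : Y | ∃ ts : ℕ → ℝ, (∀ n, 0 ≤ ts n) ∧ Tendsto ts atTop atTop ∧
        Tendsto (fun n => φ (ts n, y₀)) atTop (𝓝 η)} ⊆ I :=
  lasalle_invariance_principle_general U f φ hφcont hφ0 hφsemi hφode H H' hH hLie N hN I hI y₀ hy₀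
    horb horbU
end

section
/- Let B ⊆ ℝ³ be open and connected, and let ζ₀, ζ₁ : B → ℝ³ be continuously differentiable injective maps with everywhere invertible Jacobian. If their right Cauchy–Green tensors coincide, i.e. (Dζ₀(x))ᵀ Dζ₀(x) = (Dζ₁(x))ᵀ Dζ₁(x) for all x ∈ B, then ζ₀ and ζ₁ induce the same pairwise Euclidean distances: ‖ζ₁(x) − ζ₁(y)‖ = ‖ζ₀(x) − ζ₀(y)‖ for all x, y ∈ B. -/
/-!
Equal Cauchy–Green tensors say `‖Dζ₁(x) v‖ = ‖Dζ₀(x) v‖`. With `ζ₀⁻¹` a local inverse given by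
the inverse function theorem, `ζ₁ ∘ ζ₀⁻¹` has norm-preserving derivatives near `ζ₀ x`, so it is
1-Lipschitz on a small ball; the same holds for `ζ₀ ∘ ζ₁⁻¹`, hence `ζ₀` and `ζ₁` distort distances equally near every
point. Differentiating `‖ζ₁ a - ζ₁ b‖² = ‖ζ₀ a - ζ₀ b‖²` in `b` then shows that near `x` we have
`ζ₁ = Q ∘ ζ₀ + c` with `Q = Dζ₁(x) ∘ Dζ₀(x)⁻¹` a linear isometry. The pair `(Q, c)` is thus
locally constant, hence constant on the connected set `B`.
-/

open Matrix

/-- The Jacobian matrix of `ζ` (within the set `B`) at `x`, with respect to the standard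
basis of `ℝ³`. -/
noncomputable def jacobianMat (B : Set (EuclideanSpace ℝ (Fin 3)))
    (ζ : EuclideanSpace ℝ (Fin 3) → EuclideanSpace ℝ (Fin 3))
    (x : EuclideanSpace ℝ (Fin 3)) : Matrix (Fin 3) (Fin 3) ℝ :=
  Matrix.of fun i j => fderivWithin ℝ ζ B x (EuclideanSpace.single j 1) i

/-- The right Cauchy–Green tensor `C = (Dζ)ᵀ Dζ` of `ζ` at `x`. -/
noncomputable def cauchyGreen (B : Set (EuclideanSpace ℝ (Fin 3)))
    (ζ : EuclideanSpace ℝ (Fin 3) → EuclideanSpace ℝ (Fin 3))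
    (x : EuclideanSpace ℝ (Fin 3)) : Matrix (Fin 3) (Fin 3) ℝ :=
  (jacobianMat B ζ x)ᵀ * jacobianMat B ζ x


open Filter Topology Set

section Lipschitz

variable {E F G : Type*} [NormedAddCommGroup E] [NormedSpace ℝ E] [CompleteSpace E]
  [NormedAddCommGroup F] [NormedSpace ℝ F] [NormedAddCommGroup G] [NormedSpace ℝ G]

theorem eventually_norm_sub_le_of_norm_fderiv_le {f : E → F} {g : E → G}
    {s : Set E} (hs : IsOpen s) (hf : ContDiffOn ℝ 1 f s)
    (hf' : ∀ y ∈ s, (fderiv ℝ f y).IsInvertible) (hg : DifferentiableOn ℝ g s)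
    (hfg : ∀ y ∈ s, ∀ v, ‖fderiv ℝ g y v‖ ≤ ‖fderiv ℝ f y v‖) {x : E} (hx : x ∈ s) :
    ∀ᶠ p in 𝓝 x ×ˢ 𝓝 x, ‖g p.1 - g p.2‖ ≤ ‖f p.1 - f p.2‖ := by
  obtain ⟨A, hA⟩ := hf' x hx
  have hfx : HasStrictFDerivAt f (A : E →L[ℝ] F) x :=
    hA ▸ (hf.contDiffAt (hs.mem_nhds hx)).hasStrictFDerivAt one_ne_zero
  set e := hfx.toOpenPartialHomeomorph f
  have hex : x ∈ e.source := hfx.mem_toOpenPartialHomeomorph_source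
  have hderiv : ∀ u ∈ e.target ∩ e.symm ⁻¹' s, ∃ L : F →L[ℝ] G,
      HasFDerivAt (g ∘ e.symm) L u ∧ ‖L‖ ≤ 1 := by
    rintro u ⟨hu, hus⟩
    obtain ⟨A', hA'⟩ := hf' _ hus
    have hfu : HasFDerivAt e (A' : E →L[ℝ] F) (e.symm u) :=
      hA' ▸ ((hf.differentiableOn one_ne_zero).differentiableAt (hs.mem_nhds hus)).hasFDerivAt
    refine ⟨fderiv ℝ g (e.symm u) ∘L (A'.symm : F →L[ℝ] E),
      ((hg.differentiableAt (hs.mem_nhds hus)).hasFDerivAt.comp u (e.hasFDerivAt_symm hu hfu)),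
      ContinuousLinearMap.opNorm_le_bound _ zero_le_one fun w => ?_⟩
    simpa [← hA'] using hfg _ hus (A'.symm w)
  obtain ⟨r, hr, hball⟩ := Metric.mem_nhds_iff.1 ((e.isOpen_inter_preimage_symm hs).mem_nhds
    ⟨e.map_source hex, by simpa [e.left_inv hex] using hx⟩)
  choose! L hL hL1 using hderiv
  have hlip : ∀ u ∈ Metric.ball (f x) r, ∀ v ∈ Metric.ball (f x) r,
      ‖g (e.symm u) - g (e.symm v)‖ ≤ ‖u - v‖ := by
    intro u hu v hv
    simpa using (convex_ball (f x) r).norm_image_sub_le_of_norm_hasFDerivWithin_le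
      (fun w hw => (hL w (hball hw)).hasFDerivWithinAt) (fun w hw => hL1 w (hball hw)) hv hu
  have hnear : ∀ᶠ a in 𝓝 x, f a ∈ Metric.ball (f x) r ∧ e.symm (f a) = a :=
    (hfx.continuousAt.eventually (Metric.ball_mem_nhds _ hr)).and
      (e.eventually_left_inverse hex)
  filter_upwards [hnear.prod_mk hnear] with ⟨a, b⟩ ⟨⟨ha, hea⟩, hb, heb⟩
  simpa [hea, heb] using hlip _ ha _ hb

end Lipschitz

section Rigidity

variable {E F G : Type*} [NormedAddCommGroup E] [NormedSpace ℝ E]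
  [NormedAddCommGroup F] [InnerProductSpace ℝ F] [NormedAddCommGroup G] [InnerProductSpace ℝ G]

/-- The derivative of `g ∘ f⁻¹` at `f x`. -/
noncomputable def fderivTransition (f : E → F) (g : E → G) (x : E) : F →L[ℝ] G :=
  fderiv ℝ g x ∘L (fderiv ℝ f x).inverse

theorem norm_fderivTransition_apply {f : E → F} {g : E → G} {x : E}
    (hf' : (fderiv ℝ f x).IsInvertible) (hfg : ∀ v, ‖fderiv ℝ g x v‖ = ‖fderiv ℝ f x v‖)
    (v : F) : ‖fderivTransition f g x v‖ = ‖v‖ := by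
  simp [fderivTransition, hfg, hf'.self_apply_inverse]

theorem inner_fderivTransition {f : E → F} {g : E → G} {x : E}
    (hf' : (fderiv ℝ f x).IsInvertible) (hfg : ∀ v, ‖fderiv ℝ g x v‖ = ‖fderiv ℝ f x v‖)
    (u v : F) : inner ℝ (fderivTransition f g x u) (fderivTransition f g x v) = inner ℝ u v :=
  LinearIsometry.inner_map_map
    ⟨(fderivTransition f g x : F →ₗ[ℝ] G), norm_fderivTransition_apply hf' hfg⟩ u v

theorem surjective_fderivTransition {f : E → F} {g : E → G} {x : E}
    (hf' : (fderiv ℝ f x).IsInvertible) (hg' : (fderiv ℝ g x).IsInvertible) :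
    Function.Surjective (fderivTransition f g x) := fun w =>
  ⟨fderiv ℝ f x ((fderiv ℝ g x).inverse w), by
    simp [fderivTransition, hf'.inverse_apply_self, hg'.self_apply_inverse]⟩

theorem eventually_sub_eq_fderivTransition {f : E → F} {g : E → G} {x : E}
    (hf : DifferentiableAt ℝ f x) (hg : DifferentiableAt ℝ g x)
    (hf' : (fderiv ℝ f x).IsInvertible) (hg' : (fderiv ℝ g x).IsInvertible)
    (hfg : ∀ v, ‖fderiv ℝ g x v‖ = ‖fderiv ℝ f x v‖)
    (hiso : ∀ᶠ p in 𝓝 x ×ˢ 𝓝 x, ‖g p.1 - g p.2‖ = ‖f p.1 - f p.2‖) :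
    ∀ᶠ y in 𝓝 x, g y - g x = fderivTransition f g x (f y - f x) := by
  set Q := fderivTransition f g x
  filter_upwards [hiso.curry] with a ha
  have hzero : HasFDerivAt (fun b => ‖g a - g b‖ ^ 2 - ‖f a - f b‖ ^ 2) (0 : E →L[ℝ] ℝ) x :=
    (hasFDerivAt_const 0 x).congr_of_eventuallyEq (by filter_upwards [ha] with b hb; simp [hb])
  have hderiv := ((hg.hasFDerivAt.const_sub (g a)).norm_sq.sub
    (hf.hasFDerivAt.const_sub (f a)).norm_sq).unique hzero
  have horth : ∀ z, inner ℝ (g a - g x - Q (f a - f x)) (Q z) = 0 := by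
    intro z
    have h := congr($hderiv ((fderiv ℝ f x).inverse z))
    rw [inner_sub_left, inner_fderivTransition hf' hfg]
    simp [Q, fderivTransition, hf'.self_apply_inverse, inner_sub_left] at h ⊢
    linarith
  obtain ⟨z, hz⟩ := surjective_fderivTransition hf' hg' (g a - g x - Q (f a - f x))
  have h := horth z
  rw [hz] at h
  exact sub_eq_zero.1 (inner_self_eq_zero.1 h)

theorem eventually_fderivTransition_eq {f : E → F} {g : E → G} {x : E}
    (hf : ∀ᶠ y in 𝓝 x, DifferentiableAt ℝ f y ∧ (fderiv ℝ f y).IsInvertible)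
    (hloc : ∀ᶠ y in 𝓝 x, g y - g x = fderivTransition f g x (f y - f x)) :
    ∀ᶠ y in 𝓝 x, fderivTransition f g y = fderivTransition f g x ∧
      g y - fderivTransition f g y (f y) = g x - fderivTransition f g x (f x) := by
  set Q := fderivTransition f g x
  filter_upwards [hf, hloc.eventually_nhds, hloc] with y ⟨hfy, hfy'⟩ hgy hgy'
  have hQy : fderivTransition f g y = Q := by
    have hg : g =ᶠ[𝓝 y] fun z => g x + Q (f z - f x) := hgy.mono fun z hz => by simp [← hz]
    have hderiv : fderiv ℝ g y = Q ∘L fderiv ℝ f y := by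
      rw [hg.fderiv_eq]
      exact ((Q.hasFDerivAt.comp y (hfy.hasFDerivAt.sub_const (f x))).const_add (g x)).fderiv
    ext v
    simp [fderivTransition, hderiv, hfy'.self_apply_inverse]
  refine ⟨hQy, ?_⟩
  rw [hQy, sub_eq_sub_iff_sub_eq_sub, hgy', map_sub]

theorem IsPreconnected.norm_sub_eq_of_norm_fderiv_eq [CompleteSpace E] {f : E → F} {g : E → G}
    {s : Set E} (hs' : IsPreconnected s) (hs : IsOpen s) (hf : ContDiffOn ℝ 1 f s)
    (hg : ContDiffOn ℝ 1 g s) (hf' : ∀ y ∈ s, (fderiv ℝ f y).IsInvertible)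
    (hg' : ∀ y ∈ s, (fderiv ℝ g y).IsInvertible)
    (hfg : ∀ y ∈ s, ∀ v, ‖fderiv ℝ g y v‖ = ‖fderiv ℝ f y v‖) {x y : E} (hx : x ∈ s)
    (hy : y ∈ s) : ‖g x - g y‖ = ‖f x - f y‖ := by
  set T := fderivTransition f g
  have hdf := hf.differentiableOn one_ne_zero
  have hdg := hg.differentiableOn one_ne_zero
  have hloc (z) (hz : z ∈ s) : ∀ᶠ w in 𝓝 z, g w - g z = T z (f w - f z) := by
    have hle := eventually_norm_sub_le_of_norm_fderiv_le hs hf hf' hdg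
      (fun y hy v => (hfg y hy v).le) hz
    have hge := eventually_norm_sub_le_of_norm_fderiv_le hs hg hg' hdf
      (fun y hy v => (hfg y hy v).ge) hz
    exact eventually_sub_eq_fderivTransition (hdf.differentiableAt (hs.mem_nhds hz))
      (hdg.differentiableAt (hs.mem_nhds hz)) (hf' z hz) (hg' z hz) (hfg z hz)
      ((hle.and hge).mono fun p hp => le_antisymm hp.1 hp.2)
  have hT : T x = T y ∧ g x - T x (f x) = g y - T y (f y) := by
    refine hs'.induction₂ (fun a b => T a = T b ∧ g a - T a (f a) = g b - T b (f b))
      (fun z hz => ?_) (fun _ _ _ _ _ _ hab hbc => ⟨hab.1.trans hbc.1, hab.2.trans hbc.2⟩)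
      (fun _ _ _ _ hab => ⟨hab.1.symm, hab.2.symm⟩) hx hy
    have hsmooth : ∀ᶠ w in 𝓝 z, DifferentiableAt ℝ f w ∧ (fderiv ℝ f w).IsInvertible := by
      filter_upwards [hs.mem_nhds hz] with w hw
      exact ⟨hdf.differentiableAt (hs.mem_nhds hw), hf' w hw⟩
    exact nhdsWithin_le_nhds <| (eventually_fderivTransition_eq hsmooth (hloc z hz)).mono
      fun w hw => ⟨hw.1.symm, hw.2.symm⟩
  obtain ⟨hQ, hc⟩ := hT
  rw [← hQ, sub_eq_sub_iff_sub_eq_sub] at hc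
  rw [hc, ← map_sub, norm_fderivTransition_apply (hf' x hx) (hfg x hx)]

end Rigidity

theorem toMatrix_fderiv_eq_jacobianMat {B : Set (EuclideanSpace ℝ (Fin 3))} (hB : IsOpen B)
    {ζ : EuclideanSpace ℝ (Fin 3) → EuclideanSpace ℝ (Fin 3)} {x : EuclideanSpace ℝ (Fin 3)}
    (hx : x ∈ B) :
    LinearMap.toMatrix (EuclideanSpace.basisFun (Fin 3) ℝ).toBasis
      (EuclideanSpace.basisFun (Fin 3) ℝ).toBasis (fderiv ℝ ζ x : _ →ₗ[ℝ] _) =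
      jacobianMat B ζ x := by
  ext i j
  simp [LinearMap.toMatrix_apply, jacobianMat, fderivWithin_of_isOpen hB hx]

theorem isInvertible_fderiv_of_det_jacobianMat_ne_zero {B : Set (EuclideanSpace ℝ (Fin 3))}
    (hB : IsOpen B) {ζ : EuclideanSpace ℝ (Fin 3) → EuclideanSpace ℝ (Fin 3)}
    {x : EuclideanSpace ℝ (Fin 3)} (hx : x ∈ B) (hdet : (jacobianMat B ζ x).det ≠ 0) :
    (fderiv ℝ ζ x).IsInvertible := by
  rw [← toMatrix_fderiv_eq_jacobianMat hB hx] at hdet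
  exact ⟨(LinearEquiv.ofIsUnitDet hdet.isUnit).toContinuousLinearEquiv, rfl⟩

theorem norm_sq_fderiv_apply {B : Set (EuclideanSpace ℝ (Fin 3))} (hB : IsOpen B)
    {ζ : EuclideanSpace ℝ (Fin 3) → EuclideanSpace ℝ (Fin 3)} {x : EuclideanSpace ℝ (Fin 3)}
    (hx : x ∈ B) (v : EuclideanSpace ℝ (Fin 3)) :
    ‖fderiv ℝ ζ x v‖ ^ 2 = inner ℝ (toEuclideanLin (cauchyGreen B ζ x) v) v := by
  have hA : toEuclideanLin (jacobianMat B ζ x) = (fderiv ℝ ζ x : _ →ₗ[ℝ] _) := by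
    rw [← toMatrix_fderiv_eq_jacobianMat hB hx, toEuclideanLin_eq_toLin_orthonormal,
      toLin_toMatrix]
  rw [← real_inner_self_eq_norm_sq, ← ContinuousLinearMap.coe_coe, ← hA,
    ← LinearMap.adjoint_inner_left, ← toEuclideanLin_conjTranspose_eq_adjoint,
    conjTranspose_eq_transpose_of_trivial, cauchyGreen, toLpLin_mul_same]
  rfl

theorem norm_fderiv_apply_eq_of_cauchyGreen_eq {B : Set (EuclideanSpace ℝ (Fin 3))}
    (hB : IsOpen B) {ζ₀ ζ₁ : EuclideanSpace ℝ (Fin 3) → EuclideanSpace ℝ (Fin 3)}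
    {x : EuclideanSpace ℝ (Fin 3)} (hx : x ∈ B) (hCG : cauchyGreen B ζ₀ x = cauchyGreen B ζ₁ x)
    (v : EuclideanSpace ℝ (Fin 3)) : ‖fderiv ℝ ζ₁ x v‖ = ‖fderiv ℝ ζ₀ x v‖ := by
  rw [← sq_eq_sq₀ (norm_nonneg _) (norm_nonneg _), norm_sq_fderiv_apply hB hx,
    norm_sq_fderiv_apply hB hx, hCG]

theorem same_cauchyGreen_same_distances_general
    (B : Set (EuclideanSpace ℝ (Fin 3))) (hB : IsOpen B) (hBconn : IsConnected B)
    (ζ₀ ζ₁ : EuclideanSpace ℝ (Fin 3) → EuclideanSpace ℝ (Fin 3))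
    (h₀ : ContDiffOn ℝ 1 ζ₀ B) (h₁ : ContDiffOn ℝ 1 ζ₁ B)
    (hdet₀ : ∀ x ∈ B, (jacobianMat B ζ₀ x).det ≠ 0)
    (hdet₁ : ∀ x ∈ B, (jacobianMat B ζ₁ x).det ≠ 0)
    (hCG : ∀ x ∈ B, cauchyGreen B ζ₀ x = cauchyGreen B ζ₁ x) :
    ∀ x ∈ B, ∀ y ∈ B, ‖ζ₁ x - ζ₁ y‖ = ‖ζ₀ x - ζ₀ y‖ := fun _ hx _ hy =>
  hBconn.isPreconnected.norm_sub_eq_of_norm_fderiv_eq hB h₀ h₁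
    (fun z hz => isInvertible_fderiv_of_det_jacobianMat_ne_zero hB hz (hdet₀ z hz))
    (fun z hz => isInvertible_fderiv_of_det_jacobianMat_ne_zero hB hz (hdet₁ z hz))
    (fun z hz => norm_fderiv_apply_eq_of_cauchyGreen_eq hB hz (hCG z hz)) hx hy

/-- Two injective `C¹` configurations of an open connected body `B ⊆ ℝ³` with everywhere
invertible Jacobians and the same right Cauchy–Green tensor induce the same pairwise
Euclidean distances. -/
theorem same_cauchyGreen_same_distances
    (B : Set (EuclideanSpace ℝ (Fin 3))) (hB : IsOpen B) (hBconn : IsConnected B)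
    (ζ₀ ζ₁ : EuclideanSpace ℝ (Fin 3) → EuclideanSpace ℝ (Fin 3))
    (h₀ : ContDiffOn ℝ 1 ζ₀ B) (h₁ : ContDiffOn ℝ 1 ζ₁ B)
    (hinj₀ : Set.InjOn ζ₀ B) (hinj₁ : Set.InjOn ζ₁ B)
    (hdet₀ : ∀ x ∈ B, (jacobianMat B ζ₀ x).det ≠ 0)
    (hdet₁ : ∀ x ∈ B, (jacobianMat B ζ₁ x).det ≠ 0)
    (hCG : ∀ x ∈ B, cauchyGreen B ζ₀ x = cauchyGreen B ζ₁ x) :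
    ∀ x ∈ B, ∀ y ∈ B, ‖ζ₁ x - ζ₁ y‖ = ‖ζ₀ x - ζ₀ y‖ :=
  same_cauchyGreen_same_distances_general B hB hBconn ζ₀ ζ₁ h₀ h₁ hdet₀ hdet₁ hCG
end

section
/- (Liouville-type rigidity.) Let n ≥ 1, let U ⊆ ℝⁿ be open and connected, and let φ : U → ℝⁿ be continuously differentiable with (Dφ(x))ᵀ Dφ(x) = Id for every x ∈ U (i.e. Dφ(x) is an orthogonal matrix at every point). Then φ is the restriction of an affine isometry: there exist an orthogonal matrix R ∈ O(n) and a vector b ∈ ℝⁿ such that φ(x) = Rx + b for all x ∈ U. -/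
/-!
A `C¹` map whose derivative is everywhere a linear isometry is, by the inverse function theorem
and the mean value inequality applied to the map and to its local inverse, distance-preserving on
small balls. In a strictly convex space equality in the triangle inequality forces collinearity, so
a distance-preserving map sends segments to segments proportionally; differentiating along a
segment shows that the map agrees near each point with its first-order Taylor expansion. The
derivative is then locally constant, hence constant on the connected domain, and the map is affine.
Since `Fin n → ℝ` carries the sup norm, the argument is run in `EuclideanSpace ℝ (Fin n)`, where
an orthogonal Jacobian matrix is a linear isometry.
-/

open Matrix Metric Set Topology AffineMap

section

variable {E F : Type*} [NormedAddCommGroup E] [NormedSpace ℝ E]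
  [NormedAddCommGroup F] [NormedSpace ℝ F]

theorem map_lineMap_of_dist_eq [StrictConvexSpace ℝ F] {s : Set E} (hs : Convex ℝ s) {ψ : E → F}
    (hψ : ∀ a ∈ s, ∀ b ∈ s, dist (ψ a) (ψ b) = dist a b) {a b : E} (ha : a ∈ s) (hb : b ∈ s)
    {t : ℝ} (ht : t ∈ Icc (0 : ℝ) 1) : ψ (lineMap a b t) = lineMap (ψ a) (ψ b) t := by
  have hc : lineMap a b t ∈ s := hs.lineMap_mem ha hb ht
  apply eq_lineMap_of_dist_eq_mul_of_dist_eq_mul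
  · rw [hψ a ha _ hc, hψ a ha b hb, dist_left_lineMap, Real.norm_of_nonneg ht.1]
  · rw [hψ _ hc b hb, hψ a ha b hb, dist_lineMap_right, Real.norm_of_nonneg (sub_nonneg.2 ht.2)]

theorem HasFDerivAt.sub_eq_of_map_lineMap {ψ : E → F} {f : E →L[ℝ] F} {x y : E}
    (hf : HasFDerivAt ψ f x)
    (hline : ∀ t ∈ Icc (0 : ℝ) 1, ψ (lineMap x y t) = lineMap (ψ x) (ψ y) t) :
    ψ y - ψ x = f (y - x) := by
  have h₁ : HasDerivWithinAt (fun t : ℝ => ψ (lineMap x y t)) (f (y - x)) (Icc 0 1) 0 := by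
    have : HasFDerivAt ψ f (lineMap x y (0 : ℝ)) := by simpa using hf
    exact (this.comp_hasDerivAt 0 hasDerivAt_lineMap).hasDerivWithinAt
  have h₂ : HasDerivWithinAt (fun t : ℝ => ψ (lineMap x y t)) (ψ y - ψ x) (Icc 0 1) 0 :=
    hasDerivWithinAt_lineMap.congr hline (hline 0 ⟨le_rfl, zero_le_one⟩)
  exact (uniqueDiffOn_Icc_zero_one 0 ⟨le_rfl, zero_le_one⟩).eq_deriv _ h₂ h₁

theorem Convex.dist_le_of_hasFDerivAt_linearIsometry {s : Set E} (hs : Convex ℝ s) {f : E → F}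
    (hf : ∀ x ∈ s, ∃ L : E →ₗᵢ[ℝ] F, HasFDerivAt f L.toContinuousLinearMap x)
    {a b : E} (ha : a ∈ s) (hb : b ∈ s) : dist (f a) (f b) ≤ dist a b := by
  have hdiff : ∀ x ∈ s, DifferentiableAt ℝ f x := fun x hx =>
    let ⟨_, hL⟩ := hf x hx; hL.differentiableAt
  have hbound : ∀ x ∈ s, ‖fderiv ℝ f x‖ ≤ 1 := fun x hx =>
    let ⟨L, hL⟩ := hf x hx; hL.fderiv ▸ L.norm_toContinuousLinearMap_le
  simpa [dist_eq_norm] using hs.norm_image_sub_le_of_norm_fderiv_le hdiff hbound hb ha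

theorem exists_ball_dist_eq_of_hasStrictFDerivAt_linearIsometryEquiv [CompleteSpace E]
    {V : Set E} (hV : IsOpen V) {ψ : E → F}
    (hψ : ∀ x ∈ V, ∃ L : E ≃ₗᵢ[ℝ] F, HasStrictFDerivAt ψ (L : E →L[ℝ] F) x)
    {x₀ : E} (hx₀ : x₀ ∈ V) :
    ∃ ε > 0, ball x₀ ε ⊆ V ∧ ∀ a ∈ ball x₀ ε, ∀ b ∈ ball x₀ ε, dist (ψ a) (ψ b) = dist a b := by
  obtain ⟨L₀, hL₀⟩ := hψ x₀ hx₀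
  set p := hL₀.toOpenPartialHomeomorph ψ
  have hp : (p : E → F) = ψ := hL₀.toOpenPartialHomeomorph_coe
  obtain ⟨s, hs, hsV⟩ : ∃ s > 0, ball (ψ x₀) s ⊆ p.target ∩ p.symm ⁻¹' V := by
    refine isOpen_iff.mp (p.isOpen_inter_preimage_symm hV) _
      ⟨hL₀.image_mem_toOpenPartialHomeomorph_target, ?_⟩
    rw [mem_preimage, ← hp, p.left_inv hL₀.mem_toOpenPartialHomeomorph_source]
    exact hx₀
  have hsymm : ∀ y ∈ ball (ψ x₀) s, ∀ z ∈ ball (ψ x₀) s,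
      dist (p.symm y) (p.symm z) ≤ dist y z := by
    refine fun y hy z hz => (convex_ball (ψ x₀) s).dist_le_of_hasFDerivAt_linearIsometry
      (fun y hy => ?_) hy hz
    obtain ⟨L, hL⟩ := hψ _ (hsV hy).2
    exact ⟨L.symm.toLinearIsometry,
      p.hasFDerivAt_symm (f' := L.toContinuousLinearEquiv) (hsV hy).1 (hp ▸ hL.hasFDerivAt)⟩
  have hnear : ∀ᶠ x in 𝓝 x₀, x ∈ V ∧ x ∈ p.source ∧ ψ x ∈ ball (ψ x₀) s :=
    (hV.eventually_mem hx₀).and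
      ((p.open_source.eventually_mem hL₀.mem_toOpenPartialHomeomorph_source).and
        (hL₀.continuousAt.eventually_mem (ball_mem_nhds _ hs)))
  obtain ⟨ε, hε, hball⟩ := eventually_nhds_iff_ball.mp hnear
  refine ⟨ε, hε, fun x hx => (hball x hx).1, fun a ha b hb => le_antisymm ?_ ?_⟩
  · refine (convex_ball _ _).dist_le_of_hasFDerivAt_linearIsometry (fun x hx => ?_) ha hb
    obtain ⟨L, hL⟩ := hψ x (hball x hx).1
    exact ⟨L.toLinearIsometry, hL.hasFDerivAt⟩
  · calc dist a b = dist (p.symm (ψ a)) (p.symm (ψ b)) := by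
          rw [← hp, p.left_inv (hball a ha).2.1, p.left_inv (hball b hb).2.1]
      _ ≤ dist (ψ a) (ψ b) := hsymm _ (hball a ha).2.2 _ (hball b hb).2.2

theorem hasFDerivAt_add_apply_sub (c : F) (f : E →L[ℝ] F) (x y : E) :
    HasFDerivAt (fun z => c + f (z - x)) f y := by
  simpa using (f.hasFDerivAt.comp y ((hasFDerivAt_id y).sub_const x)).const_add c

theorem IsOpen.eqOn_add_fderiv_of_eventually_eq {V : Set E} (hV : IsOpen V)
    (hV' : IsPreconnected V) {ψ : E → F}
    (hloc : ∀ x ∈ V, ∀ᶠ y in 𝓝 x, ψ y = ψ x + fderiv ℝ ψ x (y - x)) {x₀ : E} (hx₀ : x₀ ∈ V) :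
    EqOn ψ (fun x => ψ x₀ + fderiv ℝ ψ x₀ (x - x₀)) V := by
  have hderiv : ∀ x ∈ V, ∀ᶠ y in 𝓝 x, HasFDerivAt ψ (fderiv ℝ ψ x) y := fun x hx =>
    (hloc x hx).eventually_nhds.mono fun y hy =>
      (hasFDerivAt_add_apply_sub _ _ _ _).congr_of_eventuallyEq hy
  have hfderiv : ∀ x ∈ V, HasFDerivAt (𝕜 := ℝ) (fderiv ℝ ψ) 0 x := fun x hx =>
    (hasFDerivAt_const (fderiv ℝ ψ x) x).congr_of_eventuallyEq
      ((hderiv x hx).mono fun _ hy => hy.fderiv)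
  have hconst : ∀ x ∈ V, fderiv ℝ ψ x = fderiv ℝ ψ x₀ := fun x hx =>
    hV.is_const_of_fderiv_eq_zero hV'
      (fun y hy => (hfderiv y hy).differentiableAt.differentiableWithinAt)
      (fun y hy => (hfderiv y hy).fderiv) hx hx₀
  refine hV.eqOn_of_fderiv_eq hV'
    (fun x hx => (hderiv x hx).self_of_nhds.differentiableAt.differentiableWithinAt)
    (fun x _ => (hasFDerivAt_add_apply_sub _ _ _ x).differentiableAt.differentiableWithinAt)
    (fun x hx => by rw [hconst x hx, (hasFDerivAt_add_apply_sub _ _ _ x).fderiv]) hx₀ (by simp)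

theorem IsOpen.eqOn_add_fderiv_of_hasStrictFDerivAt_linearIsometryEquiv [CompleteSpace E]
    [StrictConvexSpace ℝ F] {V : Set E} (hV : IsOpen V) (hV' : IsPreconnected V) {ψ : E → F}
    (hψ : ∀ x ∈ V, ∃ L : E ≃ₗᵢ[ℝ] F, HasStrictFDerivAt ψ (L : E →L[ℝ] F) x)
    {x₀ : E} (hx₀ : x₀ ∈ V) :
    EqOn ψ (fun x => ψ x₀ + fderiv ℝ ψ x₀ (x - x₀)) V := by
  refine hV.eqOn_add_fderiv_of_eventually_eq hV' (fun x hx => ?_) hx₀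
  obtain ⟨ε, hε, -, hdist⟩ := exists_ball_dist_eq_of_hasStrictFDerivAt_linearIsometryEquiv hV hψ hx
  obtain ⟨L, hL⟩ := hψ x hx
  filter_upwards [ball_mem_nhds x hε] with y hy
  rw [hL.hasFDerivAt.fderiv, ← hL.hasFDerivAt.sub_eq_of_map_lineMap
    (fun t ht => map_lineMap_of_dist_eq (convex_ball x ε) hdist (mem_ball_self hε) hy ht)]
  abel

end

theorem exists_linearIsometryEquiv_of_toMatrix'_orthogonal {ι : Type*} [Fintype ι]
    [DecidableEq ι] (f : (ι → ℝ) →L[ℝ] (ι → ℝ))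
    (hf : (LinearMap.toMatrix' (f : (ι → ℝ) →ₗ[ℝ] (ι → ℝ)))ᵀ *
      LinearMap.toMatrix' (f : (ι → ℝ) →ₗ[ℝ] (ι → ℝ)) = 1) :
    ∃ L : EuclideanSpace ℝ ι ≃ₗᵢ[ℝ] EuclideanSpace ℝ ι,
      (L : EuclideanSpace ℝ ι →L[ℝ] EuclideanSpace ℝ ι) =
        ((EuclideanSpace.equiv ι ℝ).symm : (ι → ℝ) →L[ℝ] EuclideanSpace ℝ ι).comp
          (f.comp (EuclideanSpace.equiv ι ℝ : EuclideanSpace ℝ ι →L[ℝ] (ι → ℝ))) := by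
  have hmem : LinearMap.toMatrix' (f : (ι → ℝ) →ₗ[ℝ] (ι → ℝ)) ∈ Matrix.orthogonalGroup ι ℝ :=
    (Matrix.mem_orthogonalGroup_iff' ι ℝ).mpr hf
  refine ⟨Unitary.linearIsometryEquiv
    ⟨_, Unitary.map_mem (Matrix.toEuclideanCLM (n := ι) (𝕜 := ℝ)) hmem⟩, ?_⟩
  ext v : 1
  apply WithLp.ofLp_injective
  simp only [Unitary.coe_linearIsometryEquiv_apply, ofLp_toEuclideanCLM,
    LinearMap.toMatrix'_mulVec, ContinuousLinearMap.coe_coe, ContinuousLinearMap.comp_apply,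
    ContinuousLinearEquiv.coe_coe, PiLp.continuousLinearEquiv_symm_apply]
  rfl

theorem liouville_rigidity_general {n : ℕ}
    (U : Set (Fin n → ℝ)) (hU : IsOpen U) (hUconn : IsConnected U)
    (φ : (Fin n → ℝ) → (Fin n → ℝ)) (hφ : ContDiffOn ℝ 1 φ U)
    (horth : ∀ x ∈ U,
      (Matrix.of fun i j => fderivWithin ℝ φ U x (Pi.single j 1) i)ᵀ *
        (Matrix.of fun i j => fderivWithin ℝ φ U x (Pi.single j 1) i) = 1) :
    ∃ (R : Matrix (Fin n) (Fin n) ℝ) (b : Fin n → ℝ),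
      Rᵀ * R = 1 ∧ ∀ x ∈ U, φ x = R.mulVec x + b := by
  set e := EuclideanSpace.equiv (Fin n) ℝ
  set D : (Fin n → ℝ) → (Fin n → ℝ) →ₗ[ℝ] (Fin n → ℝ) := fun x => fderiv ℝ φ x
  have hD : ∀ x ∈ U, HasStrictFDerivAt φ (fderiv ℝ φ x) x := fun x hx =>
    (hφ.contDiffAt (hU.mem_nhds hx)).hasStrictFDerivAt one_ne_zero
  have hjac : ∀ x ∈ U, (LinearMap.toMatrix' (D x))ᵀ * LinearMap.toMatrix' (D x) = 1 := by
    intro x hx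
    convert horth x hx using 3 <;> ext i j <;> simp [D, fderivWithin_of_isOpen hU hx]
  have hψ : ∀ y ∈ e ⁻¹' U, HasStrictFDerivAt (e.symm ∘ φ ∘ e)
      ((e.symm : (Fin n → ℝ) →L[ℝ] _).comp ((fderiv ℝ φ (e y)).comp e)) y := fun y hy =>
    e.symm.hasStrictFDerivAt.comp y ((hD _ hy).comp y e.hasStrictFDerivAt)
  obtain ⟨x₀, hx₀⟩ := hUconn.nonempty
  have hx₀' : e.symm x₀ ∈ e ⁻¹' U := by simpa
  have haffine :=
    (hU.preimage e.continuous).eqOn_add_fderiv_of_hasStrictFDerivAt_linearIsometryEquiv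
    (e.toHomeomorph.isPreconnected_preimage.mpr hUconn.isPreconnected)
    (fun y hy => (exists_linearIsometryEquiv_of_toMatrix'_orthogonal _ (hjac _ hy)).imp
      fun L hL => hL ▸ hψ y hy) hx₀'
  refine ⟨LinearMap.toMatrix' (D x₀), φ x₀ - D x₀ x₀, hjac x₀ hx₀, fun x hx => ?_⟩
  have hx' : e.symm x ∈ e ⁻¹' U := by simpa
  have hφx := congrArg e (haffine hx')
  rw [(hψ _ hx₀').hasFDerivAt.fderiv] at hφx
  simp only [Function.comp_apply, ContinuousLinearEquiv.apply_symm_apply,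
    ContinuousLinearMap.comp_apply, ContinuousLinearEquiv.coe_coe, map_sub, map_add] at hφx
  rw [LinearMap.toMatrix'_mulVec, hφx]
  simp only [D, ContinuousLinearMap.coe_coe]
  abel

/-- **Liouville-type rigidity.** If `φ` is `C¹` on an open connected set `U ⊆ ℝⁿ` and its
Jacobian matrix satisfies `(Dφ(x))ᵀ Dφ(x) = Id` at every point of `U`, then `φ` is the
restriction of an affine isometry: `φ(x) = R x + b` with `R ∈ O(n)`. -/
theorem liouville_rigidity {n : ℕ} (hn : 1 ≤ n)
    (U : Set (Fin n → ℝ)) (hU : IsOpen U) (hUconn : IsConnected U)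
    (φ : (Fin n → ℝ) → (Fin n → ℝ)) (hφ : ContDiffOn ℝ 1 φ U)
    (horth : ∀ x ∈ U,
      (Matrix.of fun i j => fderivWithin ℝ φ U x (Pi.single j 1) i)ᵀ *
        (Matrix.of fun i j => fderivWithin ℝ φ U x (Pi.single j 1) i) = 1) :
    ∃ (R : Matrix (Fin n) (Fin n) ℝ) (b : Fin n → ℝ),
      Rᵀ * R = 1 ∧ ∀ x ∈ U, φ x = R.mulVec x + b :=
  liouville_rigidity_general U hU hUconn φ hφ horth
end

section
/- Let ω : ℝ → ℝ³ be twice continuously differentiable and suppose that for every fixed vector χ ∈ ℝ³ the map t ↦ ω̇(t) × χ + ω(t) × (ω(t) × χ) is constant in t (equivalently, its time derivative vanishes identically). Then ω is constant: ω̇(t) = 0 for all t ∈ ℝ. -/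
/-!
The operator `χ ↦ a ⨯₃ χ + u ⨯₃ (u ⨯₃ χ)` has skew-symmetric part `χ ↦ a ⨯₃ χ` (the second
term is `χ ↦ (u ⬝ᵥ χ) • u - (u ⬝ᵥ u) • χ`, which is symmetric) and trace `-2 (u ⬝ᵥ u)`. So if it
does not depend on `t` for `a = ω̇ t`, `u = ω t`, then `ω̇` is constant and `ω ⬝ᵥ ω` is constant.
Hence `ω` is affine, `ω t = ω 0 + t • ω̇ 0`, and an affine map of constant norm has zero slope.
-/

open Matrix

section
variable {K : Type*} [Field K] [NeZero (2 : K)] {a b u v : Fin 3 → K}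

theorem eq_of_cross_add_cross_cross_eq
    (h : ∀ χ, a ⨯₃ χ + u ⨯₃ (u ⨯₃ χ) = b ⨯₃ χ + v ⨯₃ (v ⨯₃ χ)) : a = b := by
  have entry (i j : Fin 3) := congrFun (h (Pi.single j 1)) i
  have e01 := entry 0 1
  have e10 := entry 1 0
  have e02 := entry 0 2
  have e20 := entry 2 0
  have e12 := entry 1 2
  have e21 := entry 2 1
  simp only [cross_apply, Pi.add_apply, Pi.single_apply, cons_val, Fin.reduceEq, if_true,
    if_false] at e01 e10 e02 e20 e12 e21
  ext i
  fin_cases i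
  · exact mul_left_cancel₀ two_ne_zero (by linear_combination e21 - e12 : (2 : K) * a 0 = 2 * b 0)
  · exact mul_left_cancel₀ two_ne_zero (by linear_combination e02 - e20 : (2 : K) * a 1 = 2 * b 1)
  · exact mul_left_cancel₀ two_ne_zero (by linear_combination e10 - e01 : (2 : K) * a 2 = 2 * b 2)

theorem dotProduct_self_eq_of_cross_add_cross_cross_eq
    (h : ∀ χ, a ⨯₃ χ + u ⨯₃ (u ⨯₃ χ) = b ⨯₃ χ + v ⨯₃ (v ⨯₃ χ)) : u ⬝ᵥ u = v ⬝ᵥ v := by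
  have entry (i : Fin 3) := congrFun (h (Pi.single i 1)) i
  have e0 := entry 0
  have e1 := entry 1
  have e2 := entry 2
  simp only [cross_apply, Pi.add_apply, Pi.single_apply, cons_val, Fin.reduceEq, if_true,
    if_false] at e0 e1 e2
  refine mul_left_cancel₀ (two_ne_zero (α := K)) ?_
  simp only [vec3_dotProduct]
  linear_combination -(e0 + e1 + e2)
end

theorem eq_add_smul_of_deriv_eq {𝕜 E : Type*} [RCLike 𝕜] [NormedAddCommGroup E]
    [NormedSpace 𝕜 E]
    {f : 𝕜 → E} {a : E} (hf : Differentiable 𝕜 f) (hf' : ∀ t, deriv f t = a) (t : 𝕜) :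
    f t = f 0 + t • a := by
  have hderiv (s : 𝕜) : HasDerivAt (fun s ↦ f s - s • a) 0 s := by
    simpa [hf'] using (hf s).hasDerivAt.fun_sub ((hasDerivAt_id s).smul_const a)
  simpa [sub_eq_iff_eq_add, add_comm] using
    is_const_of_deriv_eq_zero (fun s ↦ (hderiv s).differentiableAt) (fun s ↦ (hderiv s).deriv) t 0

theorem eq_zero_of_dotProduct_self_add_smul_eq {ι R : Type*} [Fintype ι] [Field R]
    [LinearOrder R] [IsStrictOrderedRing R] {x a : ι → R}
    (h : ∀ t : R, (x + t • a) ⬝ᵥ (x + t • a) = x ⬝ᵥ x) : a = 0 := by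
  have expand (t : R) :
      (x + t • a) ⬝ᵥ (x + t • a) = x ⬝ᵥ x + 2 * t * (x ⬝ᵥ a) + t ^ 2 * (a ⬝ᵥ a) := by
    simp only [dotProduct_add, add_dotProduct, dotProduct_smul, smul_dotProduct,
      dotProduct_comm a x, smul_eq_mul]
    ring
  have h1 := h 1
  have h2 := h (-1)
  rw [expand] at h1 h2
  exact dotProduct_self_eq_zero.mp (by linear_combination (h1 + h2) / 2)

/-- If `ω : ℝ → ℝ³` is `C²` and for every fixed vector `χ ∈ ℝ³` the quantity
`ω̇(t) × χ + ω(t) × (ω(t) × χ)` is constant in `t`, then `ω` is constant: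
`ω̇ ≡ 0`. -/
theorem omega_const_of_L_const
    (ω : ℝ → (Fin 3 → ℝ)) (hω : ContDiff ℝ 2 ω)
    (hconst : ∀ χ : Fin 3 → ℝ, ∀ t s : ℝ,
      crossProduct (deriv ω t) χ + crossProduct (ω t) (crossProduct (ω t) χ) =
      crossProduct (deriv ω s) χ + crossProduct (ω s) (crossProduct (ω s) χ)) :
    ∀ t : ℝ, deriv ω t = 0 := by
  have hderiv (t : ℝ) : deriv ω t = deriv ω 0 := eq_of_cross_add_cross_cross_eq (hconst · t 0)
  have hnorm (t : ℝ) : ω t ⬝ᵥ ω t = ω 0 ⬝ᵥ ω 0 :=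
    dotProduct_self_eq_of_cross_add_cross_cross_eq (hconst · t 0)
  have haffine := eq_add_smul_of_deriv_eq (hω.differentiable (by norm_num)) hderiv
  have hzero : deriv ω 0 = 0 :=
    eq_zero_of_dotProduct_self_add_smul_eq fun t ↦ haffine t ▸ hnorm t
  intro t
  rw [hderiv t, hzero]
end
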